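/- There exist formal power series $A, B \in \mathbb{Z}[[q]]$ with constant term of $A$ equal to 1, such that $\prod_{n \ge 1}(1-q^n)^3 = A(q^3) + 3q\,B(q^3)$. -/

import Mathlib

/-!
Scaling Rothe's q-binomial theorem by a power of `q` gives the finite triple product
`∏_{k=0}^{n} (q^k - z) ∏_{k=1}^{n} (1 - z q^k)
  = ∑_{j=0}^{2n+1} (-1)^j [2n+1, j]_q q^{(j-n)(j-n-1)/2} z^j`.
Its left side vanishes at `z = 1`; differentiating there, multiplying by `(q;q)_n` and using
`(q;q)_n [2n+1, j]_q ≡ 1 mod q^{min(j, 2n+1-j)+1}` yields Jacobi's identity in the form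
`(q;q)_n^3 ≡ ∑_{t ≤ n} (-1)^t (2t+1) q^{t(t+1)/2} mod q^{n+1}`.
Finally `t(t+1)/2 mod 3` is never `2`, and it is `1` only when `t ≡ 1 mod 3`, that is,
when `3 ∣ 2t+1`.
-/

open Finset Polynomial

namespace JacobiCube

theorem choose_two_succ (j : ℕ) : (j + 1).choose 2 = j.choose 2 + j := by
  rw [Nat.choose_succ_succ', Nat.choose_one_right, add_comm]

theorem sum_range_id_succ (n : ℕ) : ∑ i ∈ range (n + 1), i = (n + 1).choose 2 := by
  rw [sum_range_id, Nat.choose_two_right]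

theorem sum_range_two_mul_add_two {M : Type*} [AddCommMonoid M] (f : ℕ → M) (n : ℕ) :
    ∑ j ∈ range (2 * n + 2), f j = ∑ t ∈ range (n + 1), (f (n - t) + f (n + 1 + t)) := by
  rw [show 2 * n + 2 = n + 1 + (n + 1) by ring, sum_range_add, sum_add_distrib,
    ← sum_range_reflect f (n + 1)]
  simp

theorem choose_two_add_mul_eq (t s : ℕ) :
    s.choose 2 + (t + s) * (2 * t + s + 1) =
      (t + s + 1).choose 2 + (t + s) * (t + s) + (t + 1).choose 2 := by
  apply Nat.cast_injective (R := ℚ)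
  push_cast [Nat.cast_choose_two]
  ring

theorem choose_two_add_mul_eq' (t s : ℕ) :
    (2 * t + s + 1).choose 2 + (t + s) * s =
      (t + s + 1).choose 2 + (t + s) * (t + s) + (t + 1).choose 2 := by
  apply Nat.cast_injective (R := ℚ)
  push_cast [Nat.cast_choose_two]
  ring

theorem le_choose_two_succ (t : ℕ) : t ≤ (t + 1).choose 2 := by
  rw [choose_two_succ]
  exact Nat.le_add_left t _

section QBinomial

variable {R : Type*} [CommRing R]

def qBinomial (q : R) : ℕ → ℕ → R
  | _, 0 => 1
  | 0, _ + 1 => 0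
  | m + 1, j + 1 => qBinomial q m (j + 1) + q ^ (m - j) * qBinomial q m j

theorem qBinomial_eq_zero_of_lt (q : R) : ∀ {m j : ℕ}, m < j → qBinomial q m j = 0
  | 0, _ + 1, _ => rfl
  | m + 1, j + 1, h => by
    rw [qBinomial, qBinomial_eq_zero_of_lt q (by omega), qBinomial_eq_zero_of_lt q (by omega),
      mul_zero, add_zero]

theorem prod_add_mul_pow_eq_sum (x y q : R) (m : ℕ) :
    ∏ k ∈ range m, (x + y * q ^ k) =
      ∑ j ∈ range (m + 1), qBinomial q m j * q ^ j.choose 2 * x ^ (m - j) * y ^ j := by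
  induction m with
  | zero => simp [qBinomial]
  | succ m ih =>
    set a := fun j ↦ qBinomial q m j * q ^ j.choose 2 * x ^ (m - j) * y ^ j with ha
    have ha_top : a (m + 1) = 0 := by simp [ha, qBinomial_eq_zero_of_lt q (Nat.lt_succ_self m)]
    have pascal : ∀ j ∈ range (m + 1), qBinomial q (m + 1) (j + 1) * q ^ (j + 1).choose 2 *
        x ^ (m + 1 - (j + 1)) * y ^ (j + 1) = a (j + 1) * x + a j * (y * q ^ m) := by
      intro j hj
      obtain ⟨k, rfl⟩ := Nat.exists_eq_add_of_le (mem_range_succ_iff.1 hj)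
      simp only [qBinomial, choose_two_succ, ha, Nat.add_sub_add_right, Nat.add_sub_cancel_left]
      rcases k with _ | k
      · simp [qBinomial_eq_zero_of_lt q (Nat.lt_succ_self j)]
        ring
      · rw [show j + (k + 1) - (j + 1) = k by omega]
        ring
    have hx : (∑ j ∈ range (m + 1), a j) * x =
        (∑ j ∈ range (m + 1), a (j + 1)) * x + x ^ (m + 1) := by
      rw [← add_zero (∑ j ∈ range (m + 1), a j), ← ha_top, ← sum_range_succ,
        sum_range_succ']
      simp [ha, qBinomial, pow_succ, add_mul]
    rw [prod_range_succ, ih, sum_range_succ' _ (m + 1), sum_congr rfl pascal, sum_add_distrib,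
      ← sum_mul, ← sum_mul, mul_add, hx]
    simp [qBinomial]
    ring

theorem map_qBinomial {S : Type*} [CommRing S] (f : R →+* S) (q : R) :
    ∀ m j, f (qBinomial q m j) = qBinomial (f q) m j
  | _, 0 => by simp [qBinomial]
  | 0, _ + 1 => by simp [qBinomial]
  | m + 1, j + 1 => by simp [qBinomial, map_qBinomial f q m]

def qPochhammer (q : R) (n : ℕ) : R := ∏ i ∈ range n, (1 - q ^ (i + 1))

theorem prod_Icc_one_sub_pow_eq_qPochhammer (q : R) (n : ℕ) :
    ∏ i ∈ Icc 1 n, (1 - q ^ i) = qPochhammer q n := by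
  rw [← Ico_add_one_right_eq_Icc, prod_Ico_eq_prod_range, qPochhammer, Nat.add_sub_cancel]
  simp only [add_comm 1]

theorem qPochhammer_mul_qBinomial (q : R) :
    ∀ m j, qPochhammer q j * qBinomial q m j = ∏ i ∈ range j, (1 - q ^ (m - i))
  | _, 0 => by simp [qPochhammer, qBinomial]
  | 0, j + 1 => by simp [qBinomial]
  | m + 1, j + 1 => by
    have h1 := qPochhammer_mul_qBinomial q m (j + 1)
    have h2 := qPochhammer_mul_qBinomial q m j
    set N := ∏ i ∈ range j, (1 - q ^ (m - i))
    have hpow : N * (q ^ (m - j) * q ^ (j + 1)) = N * q ^ (m + 1) := by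
      rcases le_or_gt j m with hj | hj
      · rw [← pow_add, show m - j + (j + 1) = m + 1 by omega]
      · rw [show N = 0 from prod_eq_zero (mem_range.2 hj) (by simp), zero_mul, zero_mul]
    have hN : ∏ i ∈ range (j + 1), (1 - q ^ (m + 1 - i)) = N * (1 - q ^ (m + 1)) := by
      simp [prod_range_succ', N]
    rw [qPochhammer, prod_range_succ, ← qPochhammer, prod_range_succ] at h1
    rw [qPochhammer, prod_range_succ, ← qPochhammer, qBinomial, hN]
    linear_combination h1 + (1 - q ^ (j + 1)) * q ^ (m - j) * h2 - hpow

theorem pow_dvd_prod_one_sub_pow_sub_one {ι : Type*} (q : R) {c : ℕ} {s : Finset ι}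
    {a : ι → ℕ} (h : ∀ i ∈ s, c ≤ a i) : q ^ c ∣ ∏ i ∈ s, (1 - q ^ a i) - 1 := by
  refine prod_induction _ (fun x ↦ q ^ c ∣ x - 1) (fun x y hx hy ↦ ?_) (by simp) fun i hi ↦ ?_
  · rw [show x * y - 1 = x * (y - 1) + (x - 1) by ring]
    exact dvd_add (hy.mul_left x) hx
  · rw [sub_sub_cancel_left, dvd_neg]
    exact pow_dvd_pow q (h i hi)

theorem pow_dvd_qPochhammer_sub_qPochhammer (q : R) {c K L : ℕ} (hK : c ≤ K + 1)
    (hL : c ≤ L + 1) : q ^ c ∣ qPochhammer q K - qPochhammer q L := by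
  wlog hKL : K ≤ L generalizing K L
  · exact dvd_sub_comm.1 (this hL hK (by omega))
  rw [qPochhammer, qPochhammer, ← prod_range_mul_prod_Ico _ hKL, ← mul_one_sub, ← neg_sub,
    mul_neg, dvd_neg]
  exact (pow_dvd_prod_one_sub_pow_sub_one q fun i hi ↦ by simp at hi; omega).mul_left _

theorem pow_dvd_qPochhammer_mul_qBinomial_sub_one (q : R) {c K m j : ℕ} (hK : c ≤ K + 1)
    (hj : c ≤ j + 1) (hm : c + j ≤ m + 1) :
    q ^ c ∣ qPochhammer q K * qBinomial q m j - 1 := by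
  have hN : q ^ c ∣ qPochhammer q j * qBinomial q m j - 1 := by
    rw [qPochhammer_mul_qBinomial]
    exact pow_dvd_prod_one_sub_pow_sub_one q fun i hi ↦ by simp at hi; omega
  rw [show qPochhammer q K * qBinomial q m j - 1 =
      (qPochhammer q K - qPochhammer q j) * qBinomial q m j +
        (qPochhammer q j * qBinomial q m j - 1) by ring]
  exact dvd_add ((pow_dvd_qPochhammer_sub_qPochhammer q hK hj).mul_right _) hN

end QBinomial

section TripleProduct

variable {R : Type*} [CommRing R]

/-- `z ^ n ∏_{k=1}^{n} (1 - q^k / z) (1 - z q^k)`, so that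
`(1 - z) * tripleProd q n = ∏_{k=0}^{n} (q^k - z) ∏_{k=1}^{n} (1 - z q^k)`. -/
noncomputable def tripleProd (q : R) (n : ℕ) : R[X] :=
  (∏ k ∈ range n, (C (q ^ (k + 1)) - X)) * ∏ k ∈ range n, (1 - X * C (q ^ (k + 1)))

theorem eval_one_tripleProd (q : R) (n : ℕ) :
    (tripleProd q n).eval 1 = (-1) ^ n * qPochhammer q n ^ 2 := by
  simp only [tripleProd, eval_mul, eval_prod, eval_sub, eval_C, eval_X, eval_one, one_mul]
  rw [prod_congr rfl fun k _ ↦ (neg_sub (1 : R) (q ^ (k + 1))).symm, prod_neg, card_range,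
    qPochhammer]
  ring

theorem C_pow_mul_one_sub_X_mul_tripleProd (q : R) (n : ℕ) :
    C (q ^ ((n + 1).choose 2 + n * n)) * ((1 - X) * tripleProd q n) =
      ∏ i ∈ range (2 * n + 1), (C (q ^ n) + -X * C q ^ i) := by
  have hlow : ∀ i ∈ range (n + 1),
      C (q ^ n) + -X * C q ^ i = C (q ^ i) * (C (q ^ (n - i)) - X) := by
    intro i hi
    rw [← map_pow C q i, mul_sub, ← map_mul, ← pow_add,
      Nat.add_sub_cancel' (mem_range_succ_iff.1 hi)]
    ring
  have hhigh : ∀ k ∈ range n, C (q ^ n) + -X * C q ^ (n + 1 + k) =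
      C (q ^ n) * (1 - X * C (q ^ (k + 1))) := by
    intro k _
    rw [map_pow, map_pow, show n + 1 + k = n + (k + 1) by ring, pow_add]
    ring
  have hrefl : ∏ i ∈ range (n + 1), (C (q ^ (n - i)) - X) =
      (∏ k ∈ range n, (C (q ^ (k + 1)) - X)) * (1 - X) := by
    rw [← prod_range_reflect _ (n + 1), prod_range_succ']
    congr 1
    · exact prod_congr rfl fun k hk ↦ by rw [mem_range] at hk; congr 3; omega
    · simp
  rw [show 2 * n + 1 = n + 1 + n by ring, prod_range_add, prod_congr rfl hlow,
    prod_congr rfl hhigh, prod_mul_distrib, prod_mul_distrib, hrefl, prod_const, card_range,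
    ← map_prod, prod_pow_eq_pow_sum, sum_range_id_succ, ← map_pow, ← pow_mul, tripleProd]
  rw [pow_add, map_mul]
  ring

theorem pow_mul_qPochhammer_sq_eq_sum (q : R) (n : ℕ) :
    q ^ ((n + 1).choose 2 + n * n) * ((-1) ^ (n + 1) * qPochhammer q n ^ 2) =
      ∑ j ∈ range (2 * n + 2),
        qBinomial q (2 * n + 1) j * q ^ (j.choose 2 + n * (2 * n + 1 - j)) * (-1) ^ j * j := by
  have hterm : ∀ j, qBinomial (C q) (2 * n + 1) j * C q ^ j.choose 2 *
      C (q ^ n) ^ (2 * n + 1 - j) * (-X) ^ j = C (qBinomial q (2 * n + 1) j *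
        q ^ (j.choose 2 + n * (2 * n + 1 - j)) * (-1) ^ j) * X ^ j := by
    intro j
    rw [← map_qBinomial, neg_pow, pow_add, pow_mul]
    simp only [map_mul, map_pow, map_neg, map_one]
    ring
  have h := congrArg (fun p ↦ (derivative p).eval 1) (C_pow_mul_one_sub_X_mul_tripleProd q n)
  simp only [prod_add_mul_pow_eq_sum, hterm, derivative_sum, derivative_C_mul_X_pow,
    eval_finsetSum] at h
  simp only [derivative_mul, derivative_C, derivative_sub, derivative_one, derivative_X,
    eval_mul, eval_add, eval_sub, eval_C, eval_one, eval_X, eval_zero, eval_pow, one_pow,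
    eval_one_tripleProd, mul_one, sub_self, zero_mul, zero_add, add_zero] at h
  rw [← h]
  ring

theorem pow_dvd_qPochhammer_pow_three_sub_sum [IsDomain R] {q : R} (hq : q ≠ 0) (n : ℕ) :
    q ^ (n + 1) ∣ qPochhammer q n ^ 3 -
      ∑ t ∈ range (n + 1), (-1) ^ t * (2 * t + 1) * q ^ (t + 1).choose 2 := by
  set N := (n + 1).choose 2 + n * n
  -- Pair the terms `j = n - t` and `j = n + 1 + t`: both carry `q ^ (N + (t + 1).choose 2)`,
  -- and `(q;q)_n [2n+1, j]_q ≡ 1` modulo `q ^ (n - t + 1)`.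
  have key : q ^ (N + (n + 1)) ∣ qPochhammer q n * ∑ j ∈ range (2 * n + 2),
      qBinomial q (2 * n + 1) j * q ^ (j.choose 2 + n * (2 * n + 1 - j)) * (-1) ^ j * j -
        q ^ N * ((-1) ^ (n + 1) *
          ∑ t ∈ range (n + 1), (-1) ^ t * (2 * t + 1) * q ^ (t + 1).choose 2) := by
    rw [sum_range_two_mul_add_two, mul_sum, mul_sum, mul_sum, ← sum_sub_distrib]
    refine dvd_sum fun t ht ↦ ?_
    obtain ⟨s, rfl⟩ := Nat.exists_eq_add_of_le (mem_range_succ_iff.1 ht)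
    have hsign : ((-1 : R)) ^ (2 * t) = 1 := by rw [pow_mul]; simp
    rw [Nat.add_sub_cancel_left, show t + s + 1 + t = 2 * t + s + 1 by ring,
      show 2 * (t + s) + 1 - s = 2 * t + s + 1 by omega,
      show 2 * (t + s) + 1 - (2 * t + s + 1) = s by omega,
      choose_two_add_mul_eq, choose_two_add_mul_eq']
    have hdiv : q ^ (s + 1) ∣
        (-1) ^ s * s * (qPochhammer q (t + s) * qBinomial q (2 * (t + s) + 1) s - 1) +
          (-1) ^ (2 * t + s + 1) * (2 * t + s + 1 : ℕ) *
            (qPochhammer q (t + s) * qBinomial q (2 * (t + s) + 1) (2 * t + s + 1) - 1) :=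
      dvd_add
        ((pow_dvd_qPochhammer_mul_qBinomial_sub_one q (by omega) le_rfl (by omega)).mul_left _)
        ((pow_dvd_qPochhammer_mul_qBinomial_sub_one q (by omega) (by omega) (by omega)).mul_left _)
    have hexp : N + (t + s + 1) ≤ N + (t + 1).choose 2 + (s + 1) := by
      linarith [le_choose_two_succ t]
    convert (pow_dvd_pow q hexp).trans (pow_add q _ (s + 1) ▸ mul_dvd_mul_left _ hdiv) using 1
    push_cast
    linear_combination -(q ^ (N + (t + 1).choose 2) * (-1) ^ s * s) * hsign
  rw [← pow_mul_qPochhammer_sq_eq_sum, pow_add] at key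
  rw [← mul_dvd_mul_iff_left (pow_ne_zero N hq), ← (isUnit_neg_one.pow (n + 1)).dvd_mul_left]
  convert key using 1
  ring

end TripleProduct

theorem natCast_choose_two_succ_mul_two (t : ℕ) :
    (((t + 1).choose 2 % 3 : ℕ) : ZMod 3) * 2 = (t + 1) * t := by
  have h : (t + 1).choose 2 * 2 = (t + 1) * t := by
    simpa using (Nat.add_one_mul_choose_eq t 1).symm
  rw [ZMod.natCast_mod]
  simpa using congrArg (Nat.cast : ℕ → ZMod 3) h

theorem choose_two_succ_mod_three_ne_two (t : ℕ) : (t + 1).choose 2 % 3 ≠ 2 := by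
  intro h
  have h2 := natCast_choose_two_succ_mul_two t
  rw [h] at h2
  generalize (t : ZMod 3) = x at h2
  revert x; decide

theorem three_dvd_two_mul_add_one_of_choose_two_succ_mod_three (t : ℕ)
    (h : (t + 1).choose 2 % 3 = 1) : 3 ∣ 2 * t + 1 := by
  have h2 := natCast_choose_two_succ_mul_two t
  rw [h] at h2
  rw [← ZMod.natCast_eq_zero_iff]
  push_cast
  generalize (t : ZMod 3) = x at h2 ⊢
  revert x; decide

theorem coeff_prod_one_sub_X_pow_cube (g : ℕ) :
    PowerSeries.coeff g (∏ n ∈ Icc 1 g, (1 - PowerSeries.X ^ n : PowerSeries ℤ) ^ 3) =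
      ∑ t ∈ range (g + 1), if (t + 1).choose 2 = g then (-1) ^ t * (2 * t + 1 : ℤ) else 0 := by
  have h := pow_dvd_qPochhammer_pow_three_sub_sum (PowerSeries.X_ne_zero (R := ℤ)) g
  rw [PowerSeries.X_pow_dvd_iff] at h
  rw [prod_pow, prod_Icc_one_sub_pow_eq_qPochhammer,
    sub_eq_zero.1 ((map_sub _ _ _).symm.trans (h g g.lt_succ_self)), map_sum]
  refine sum_congr rfl fun t _ ↦ ?_
  rw [show ((-1) ^ t * (2 * t + 1) : PowerSeries ℤ) =
      PowerSeries.C ((-1) ^ t * (2 * t + 1 : ℤ)) by simp, PowerSeries.coeff_C_mul_X_pow]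
  exact if_congr eq_comm rfl rfl

theorem coeff_prod_one_sub_X_pow_cube_eq_zero {g : ℕ} (hg : g % 3 = 2) :
    PowerSeries.coeff g (∏ n ∈ Icc 1 g, (1 - PowerSeries.X ^ n : PowerSeries ℤ) ^ 3) = 0 := by
  rw [coeff_prod_one_sub_X_pow_cube]
  refine sum_eq_zero fun t _ ↦ if_neg fun h ↦ ?_
  exact choose_two_succ_mod_three_ne_two t (h ▸ hg)

theorem three_dvd_coeff_prod_one_sub_X_pow_cube {g : ℕ} (hg : g % 3 = 1) :
    3 ∣ PowerSeries.coeff g (∏ n ∈ Icc 1 g, (1 - PowerSeries.X ^ n : PowerSeries ℤ) ^ 3) := by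
  rw [coeff_prod_one_sub_X_pow_cube]
  refine dvd_sum fun t _ ↦ ?_
  split_ifs with h
  · have h3 := three_dvd_two_mul_add_one_of_choose_two_succ_mod_three t (h ▸ hg)
    exact Dvd.dvd.mul_left (by exact_mod_cast h3) _
  · exact dvd_zero 3

end JacobiCube

open PowerSeries Finset

theorem stmt15 :
    ∃ A B : ℕ → ℤ, A 0 = 1 ∧
      ∀ g : ℕ,
        PowerSeries.coeff (R := ℤ) g (∏ n ∈ Icc 1 g, (1 - PowerSeries.X ^ n) ^ 3) =
          (if g % 3 = 0 then A (g / 3) else 0) +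
            3 * (if g % 3 = 1 then B (g / 3) else 0) := by
  set c : ℕ → ℤ := fun g ↦ PowerSeries.coeff g (∏ n ∈ Icc 1 g, (1 - PowerSeries.X ^ n) ^ 3)
  refine ⟨fun k ↦ c (3 * k), fun k ↦ c (3 * k + 1) / 3, by simp [c], fun g ↦ ?_⟩
  rcases (by omega : g % 3 = 0 ∨ g % 3 = 1 ∨ g % 3 = 2) with hg | hg | hg
  · simp [hg, show 3 * (g / 3) = g by omega, c]
  · simp [hg, show 3 * (g / 3) + 1 = g by omega, c,
      Int.mul_ediv_cancel' (JacobiCube.three_dvd_coeff_prod_one_sub_X_pow_cube hg)]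
  · simp [hg, JacobiCube.coeff_prod_one_sub_X_pow_cube_eq_zero hg]
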